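/- arXiv:1801.06432 — 2 statements merged into one kernel-verified Lean document; each statement's English description precedes it below -/
import Mathlib

section
/- Let μ > 0 and μ_K > 0 be reals, and let A (m × r), B (n × r), X̃ (m × n), Λ (m × n), R (r × r), Y (r × r) be real matrices. Define f(K) = ⟨Λ, X̃ − A K Bᵀ⟩ + (μ/2)‖X̃ − A K Bᵀ‖_F² + ⟨Y, R − K⟩ + (μ_K/2)‖R − K‖_F² for K an r × r real matrix, where ⟨M, N⟩ = Σ_{i,j} M_{i,j} N_{i,j}. Then an r × r matrix K₀ minimizes f over all r × r matrices if and only if K₀ satisfies the Stein equation μ_K K₀ + μ AᵀA K₀ BᵀB = Aᵀ(Λ + μ X̃)B + μ_K R + Y. -/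
/-!
Around any `K₀` the objective expands exactly as `f (K₀ + H) = f K₀ + ⟨G, H⟩ + q H`, where `G` is
the difference of the two sides of the Stein equation and `q H = (μ/2)‖A H Bᵀ‖² + (μ_K/2)‖H‖² ≥ 0`
is homogeneous of degree two. Testing `H = ± t v` with `t → 0⁺` shows that `K₀` is a minimizer
iff `⟨G, ·⟩` vanishes, i.e. iff `G = 0`.
-/

open Matrix

/-- The trace inner product `⟨M, N⟩ = Σ_{i,j} M_{i,j} N_{i,j}` on real matrices. -/
def matInner {m n : Type*} [Fintype m] [Fintype n] (M N : Matrix m n ℝ) : ℝ :=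
  ∑ i, ∑ j, M i j * N i j

/-- The squared Frobenius norm `‖M‖_F² = Σ_{i,j} M_{i,j}²`. -/
def frobSq {m n : Type*} [Fintype m] [Fintype n] (M : Matrix m n ℝ) : ℝ :=
  ∑ i, ∑ j, (M i j) ^ 2

open Filter Topology

lemma nonneg_of_forall_pos_le_mul_add_sq_mul {a b : ℝ} (h : ∀ t > 0, 0 ≤ t * a + t ^ 2 * b) :
    0 ≤ a := by
  have hlim : Tendsto (fun t : ℝ => a + t * b) (𝓝[>] 0) (𝓝 a) := by
    have : Tendsto (fun t : ℝ => a + t * b) (𝓝 0) (𝓝 (a + 0 * b)) :=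
      (continuous_const.add (continuous_id.mul continuous_const)).tendsto 0
    simpa using this.mono_left nhdsWithin_le_nhds
  refine ge_of_tendsto hlim (eventually_nhdsWithin_of_forall fun t (ht : 0 < t) => ?_)
  have := h t ht
  nlinarith

lemma forall_le_iff_of_eq_add_add {V : Type*} [AddCommGroup V] [Module ℝ V] {f ℓ q : V → ℝ}
    {x₀ : V} (hℓ : ∀ (t : ℝ) v, ℓ (t • v) = t * ℓ v) (hq_nonneg : ∀ v, 0 ≤ q v)
    (hq : ∀ (t : ℝ) v, q (t • v) = t ^ 2 * q v) (hf : ∀ v, f (x₀ + v) = f x₀ + ℓ v + q v) :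
    (∀ x, f x₀ ≤ f x) ↔ ∀ v, ℓ v = 0 := by
  constructor
  · intro hmin
    have hℓ_nonneg : ∀ v, 0 ≤ ℓ v := fun v =>
      nonneg_of_forall_pos_le_mul_add_sq_mul fun t _ => by
        have := hmin (x₀ + t • v)
        rw [hf, hℓ, hq] at this
        linarith
    intro v
    have hneg : ℓ (-v) = -ℓ v := by rw [← neg_one_smul ℝ v, hℓ, neg_one_mul]
    linarith [hℓ_nonneg v, hℓ_nonneg (-v)]
  · intro hzero x
    have := hf (x - x₀)
    rw [add_sub_cancel, hzero] at this
    linarith [hq_nonneg (x - x₀)]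

section MatInner

variable {m n r : Type*} [Fintype m] [Fintype n] [Fintype r]

lemma matInner_eq_trace (M N : Matrix m n ℝ) : matInner M N = trace (Mᵀ * N) := by
  simp only [matInner, trace, diag, mul_apply, transpose_apply]
  exact Finset.sum_comm

lemma matInner_mul_mul_transpose (M : Matrix m n ℝ) (A : Matrix m r ℝ) (B : Matrix n r ℝ)
    (H : Matrix r r ℝ) : matInner M (A * H * Bᵀ) = matInner (Aᵀ * M * B) H := by
  rw [matInner_eq_trace, matInner_eq_trace, ← Matrix.mul_assoc, trace_mul_comm]
  simp only [transpose_mul, transpose_transpose, Matrix.mul_assoc]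

@[simp] lemma matInner_add_left (M N P : Matrix m n ℝ) :
    matInner (M + N) P = matInner M P + matInner N P := by
  simp [matInner, add_mul, Finset.sum_add_distrib]

@[simp] lemma matInner_sub_left (M N P : Matrix m n ℝ) :
    matInner (M - N) P = matInner M P - matInner N P := by
  simp [matInner, sub_mul, Finset.sum_sub_distrib]

@[simp] lemma matInner_sub_right (M N P : Matrix m n ℝ) :
    matInner M (N - P) = matInner M N - matInner M P := by
  simp [matInner, mul_sub, Finset.sum_sub_distrib]

@[simp] lemma matInner_smul_left (c : ℝ) (M N : Matrix m n ℝ) :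
    matInner (c • M) N = c * matInner M N := by
  simp [matInner, Finset.mul_sum, mul_assoc]

@[simp] lemma matInner_smul_right (c : ℝ) (M N : Matrix m n ℝ) :
    matInner M (c • N) = c * matInner M N := by
  simp [matInner, Finset.mul_sum, mul_left_comm]

lemma matInner_self (M : Matrix m n ℝ) : matInner M M = frobSq M := by
  simp [matInner, frobSq, sq]

lemma frobSq_sub (M N : Matrix m n ℝ) :
    frobSq (M - N) = frobSq M - 2 * matInner M N + frobSq N := by
  simp only [← matInner_self, matInner_sub_left, matInner_sub_right]
  rw [show matInner N M = matInner M N by simp only [matInner, mul_comm]]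
  ring

lemma frobSq_nonneg (M : Matrix m n ℝ) : 0 ≤ frobSq M := by
  unfold frobSq
  positivity

lemma frobSq_smul (c : ℝ) (M : Matrix m n ℝ) : frobSq (c • M) = c ^ 2 * frobSq M := by
  simp [← matInner_self, sq, mul_assoc]

lemma frobSq_eq_zero_iff {M : Matrix m n ℝ} : frobSq M = 0 ↔ M = 0 := by
  simp [frobSq, Finset.sum_eq_zero_iff_of_nonneg, Finset.sum_nonneg, sq_nonneg, ← Matrix.ext_iff]

lemma forall_matInner_eq_zero_iff {G : Matrix m n ℝ} : (∀ H, matInner G H = 0) ↔ G = 0 :=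
  ⟨fun h => frobSq_eq_zero_iff.mp (matInner_self G ▸ h G), fun h H => by simp [h, matInner]⟩

end MatInner

section ADMM

variable {m n r : Type*} [Fintype m] [Fintype n] [Fintype r]

noncomputable def admmSplitObjective (μ μK : ℝ) (A : Matrix m r ℝ) (B : Matrix n r ℝ)
    (Xt Λ : Matrix m n ℝ) (R Y K : Matrix r r ℝ) : ℝ :=
  matInner Λ (Xt - A * K * Bᵀ) + (μ / 2) * frobSq (Xt - A * K * Bᵀ)
    + matInner Y (R - K) + (μK / 2) * frobSq (R - K)

/-- The gradient of `admmSplitObjective` at `K₀`; its vanishing is the Stein equation. -/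
noncomputable def admmSplitGradient (μ μK : ℝ) (A : Matrix m r ℝ) (B : Matrix n r ℝ)
    (Xt Λ : Matrix m n ℝ) (R Y K₀ : Matrix r r ℝ) : Matrix r r ℝ :=
  μK • K₀ + μ • (Aᵀ * A * K₀ * (Bᵀ * B)) - (Aᵀ * (Λ + μ • Xt) * B + μK • R + Y)

lemma admmSplitObjective_add (μ μK : ℝ) (A : Matrix m r ℝ) (B : Matrix n r ℝ)
    (Xt Λ : Matrix m n ℝ) (R Y K₀ H : Matrix r r ℝ) :
    admmSplitObjective μ μK A B Xt Λ R Y (K₀ + H) =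
      admmSplitObjective μ μK A B Xt Λ R Y K₀
        + matInner (admmSplitGradient μ μK A B Xt Λ R Y K₀) H
        + ((μ / 2) * frobSq (A * H * Bᵀ) + (μK / 2) * frobSq H) := by
  have hX : Xt - A * (K₀ + H) * Bᵀ = (Xt - A * K₀ * Bᵀ) - A * H * Bᵀ := by
    simp only [Matrix.mul_add, Matrix.add_mul]
    abel
  have hR : R - (K₀ + H) = (R - K₀) - H := by abel
  simp only [admmSplitObjective, admmSplitGradient, hX, hR, frobSq_sub, matInner_sub_right,
    matInner_mul_mul_transpose]
  simp only [Matrix.mul_add, Matrix.add_mul, Matrix.mul_sub, Matrix.sub_mul, Matrix.mul_smul,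
    Matrix.smul_mul, Matrix.mul_assoc, matInner_sub_left, matInner_add_left, matInner_smul_left]
  ring

end ADMM

/-- A matrix `K₀` minimizes the ADMM objective
`f(K) = ⟨Λ, X̃ − A K Bᵀ⟩ + (μ/2)‖X̃ − A K Bᵀ‖_F² + ⟨Y, R − K⟩ + (μ_K/2)‖R − K‖_F²`
if and only if it satisfies the Stein equation
`μ_K K₀ + μ AᵀA K₀ BᵀB = Aᵀ(Λ + μ X̃) B + μ_K R + Y`. -/
theorem admm_split_update_iff_stein {m n r : Type*} [Fintype m] [Fintype n] [Fintype r]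
    (μ μK : ℝ) (hμ : 0 < μ) (hμK : 0 < μK)
    (A : Matrix m r ℝ) (B : Matrix n r ℝ) (Xt Λ : Matrix m n ℝ)
    (R Y : Matrix r r ℝ)
    (f : Matrix r r ℝ → ℝ)
    (hf : ∀ K, f K = matInner Λ (Xt - A * K * Bᵀ) + (μ / 2) * frobSq (Xt - A * K * Bᵀ)
      + matInner Y (R - K) + (μK / 2) * frobSq (R - K))
    (K₀ : Matrix r r ℝ) :
    (∀ K, f K₀ ≤ f K) ↔
      μK • K₀ + μ • (Aᵀ * A * K₀ * (Bᵀ * B)) = Aᵀ * (Λ + μ • Xt) * B + μK • R + Y := by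
  obtain rfl : f = admmSplitObjective μ μK A B Xt Λ R Y := funext hf
  rw [forall_le_iff_of_eq_add_add (fun t H => matInner_smul_right t _ H)
      (fun H => by have := frobSq_nonneg (A * H * Bᵀ); have := frobSq_nonneg H; positivity)
      (fun t H => by simp only [Matrix.mul_smul, Matrix.smul_mul, frobSq_smul]; ring)
      (admmSplitObjective_add μ μK A B Xt Λ R Y K₀),
    forall_matInner_eq_zero_iff, admmSplitGradient, sub_eq_zero]
end

section
/- For real matrices A of size m × n and B of size p × q, the ℓ2 operator norm of their Kronecker product equals the product of their ℓ2 operator norms: ‖A ⊗ B‖ = ‖A‖ · ‖B‖, where ‖M‖ denotes the operator norm of the linear map x ↦ M x from the Euclidean space of the column index to the Euclidean space of the row index (equivalently, the largest singular value of M). -/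
open Matrix Finset
open scoped Kronecker

/-- The ℓ2 operator norm (spectral norm) of a real matrix: the operator norm of
the induced linear map between Euclidean spaces. -/
noncomputable def l2OpNorm {m n : Type*} [Fintype m] [Fintype n] [DecidableEq n]
    (M : Matrix m n ℝ) : ℝ :=
  ‖LinearMap.toContinuousLinearMap (Matrix.toEuclideanLin M)‖

section aux

set_option linter.unusedSectionVars false
variable {m n p q : Type*} [Fintype m] [Fintype n] [Fintype p] [Fintype q]
  [DecidableEq n] [DecidableEq q]

lemma norm_euclid_sq {ι : Type*} [Fintype ι] (y : EuclideanSpace ℝ ι) :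
    ‖y‖ ^ 2 = ∑ i, y i ^ 2 := by
  rw [EuclideanSpace.norm_eq, Real.sq_sqrt (by positivity)]
  simp [sq_abs]

lemma l2OpNorm_nonneg (M : Matrix m n ℝ) : 0 ≤ l2OpNorm M := norm_nonneg _

lemma sq_sum_mulVec_le (M : Matrix m n ℝ) (x : n → ℝ) :
    ∑ i, (M.mulVec x i) ^ 2 ≤ (l2OpNorm M) ^ 2 * ∑ j, (x j) ^ 2 := by
  set X : EuclideanSpace ℝ n := (WithLp.equiv 2 (n → ℝ)).symm x with hX
  have h2 : ‖Matrix.toEuclideanLin M X‖ ≤ l2OpNorm M * ‖X‖ :=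
    (LinearMap.toContinuousLinearMap (Matrix.toEuclideanLin M)).le_opNorm X
  have hsq := mul_self_le_mul_self (norm_nonneg _) h2
  have hL : ‖Matrix.toEuclideanLin M X‖ ^ 2 = ∑ i, (M.mulVec x i) ^ 2 := by
    rw [norm_euclid_sq]; rfl
  have hR : ‖X‖ ^ 2 = ∑ j, (x j) ^ 2 := by rw [norm_euclid_sq]; rfl
  calc ∑ i, (M.mulVec x i) ^ 2 = ‖Matrix.toEuclideanLin M X‖ ^ 2 := hL.symm
    _ ≤ (l2OpNorm M * ‖X‖) ^ 2 := by rw [sq, sq]; exact hsq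
    _ = (l2OpNorm M) ^ 2 * ∑ j, (x j) ^ 2 := by rw [mul_pow, hR]

lemma kron_mulVec_tensor (A : Matrix m n ℝ) (B : Matrix p q ℝ) (x : n → ℝ) (y : q → ℝ) :
    (A ⊗ₖ B).mulVec (fun jl : n × q => x jl.1 * y jl.2)
      = fun ik : m × p => A.mulVec x ik.1 * B.mulVec y ik.2 := by
  funext ik
  simp only [mulVec, dotProduct, kroneckerMap_apply, Fintype.sum_prod_type,
    Finset.sum_mul_sum]
  refine Finset.sum_congr rfl fun j _ => Finset.sum_congr rfl fun l _ => by ring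

lemma kron_mulVec_entry (A : Matrix m n ℝ) (B : Matrix p q ℝ) (v : n × q → ℝ)
    (i : m) (k : p) :
    (A ⊗ₖ B).mulVec v (i, k)
      = A.mulVec (fun j => B.mulVec (fun l => v (j, l)) k) i := by
  simp only [mulVec, dotProduct, kroneckerMap_apply, Fintype.sum_prod_type,
    Finset.mul_sum]
  refine Finset.sum_congr rfl fun j _ => Finset.sum_congr rfl fun l _ => by ring

lemma key_sq_le (A : Matrix m n ℝ) (B : Matrix p q ℝ) (v : n × q → ℝ) :
    ∑ ik : m × p, ((A ⊗ₖ B).mulVec v ik) ^ 2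
      ≤ (l2OpNorm A) ^ 2 * (l2OpNorm B) ^ 2 * ∑ jl : n × q, (v jl) ^ 2 := by
  have step1 : ∑ ik : m × p, ((A ⊗ₖ B).mulVec v ik) ^ 2
      = ∑ k : p, ∑ i : m, (A.mulVec (fun j => B.mulVec (fun l => v (j, l)) k) i) ^ 2 := by
    rw [Fintype.sum_prod_type, Finset.sum_comm]
    exact Finset.sum_congr rfl fun k _ => Finset.sum_congr rfl fun i _ => by
      rw [kron_mulVec_entry]
  rw [step1]
  calc ∑ k : p, ∑ i : m, (A.mulVec (fun j => B.mulVec (fun l => v (j, l)) k) i) ^ 2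
      ≤ ∑ k : p, (l2OpNorm A) ^ 2 * ∑ j : n, (B.mulVec (fun l => v (j, l)) k) ^ 2 :=
        Finset.sum_le_sum fun k _ => sq_sum_mulVec_le A _
    _ = (l2OpNorm A) ^ 2 * ∑ j : n, ∑ k : p, (B.mulVec (fun l => v (j, l)) k) ^ 2 := by
        rw [← Finset.mul_sum, Finset.sum_comm]
    _ ≤ (l2OpNorm A) ^ 2 * ∑ j : n, ((l2OpNorm B) ^ 2 * ∑ l : q, (v (j, l)) ^ 2) := by
        refine mul_le_mul_of_nonneg_left (Finset.sum_le_sum fun j _ => ?_) (by positivity)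
        exact sq_sum_mulVec_le B _
    _ = (l2OpNorm A) ^ 2 * (l2OpNorm B) ^ 2 * ∑ jl : n × q, (v jl) ^ 2 := by
        rw [← Finset.mul_sum, ← mul_assoc, Fintype.sum_prod_type]

lemma kron_le (A : Matrix m n ℝ) (B : Matrix p q ℝ) :
    l2OpNorm (A ⊗ₖ B) ≤ l2OpNorm A * l2OpNorm B := by
  refine ContinuousLinearMap.opNorm_le_bound _
    (mul_nonneg (l2OpNorm_nonneg A) (l2OpNorm_nonneg B)) fun v => ?_
  have hL : ‖LinearMap.toContinuousLinearMap (Matrix.toEuclideanLin (A ⊗ₖ B)) v‖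
      = Real.sqrt (∑ ik : m × p, ((A ⊗ₖ B).mulVec v ik) ^ 2) := by
    rw [show ‖LinearMap.toContinuousLinearMap (Matrix.toEuclideanLin (A ⊗ₖ B)) v‖
        = Real.sqrt (‖LinearMap.toContinuousLinearMap (Matrix.toEuclideanLin (A ⊗ₖ B)) v‖ ^ 2)
      from (Real.sqrt_sq (norm_nonneg _)).symm, norm_euclid_sq]
    rfl
  have hR : l2OpNorm A * l2OpNorm B * ‖v‖
      = Real.sqrt ((l2OpNorm A) ^ 2 * (l2OpNorm B) ^ 2 * ∑ jl : n × q, (v jl) ^ 2) := by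
    rw [Real.sqrt_mul (by positivity), Real.sqrt_mul (by positivity),
      Real.sqrt_sq (l2OpNorm_nonneg A), Real.sqrt_sq (l2OpNorm_nonneg B)]
    rw [show ‖v‖ = Real.sqrt (‖v‖ ^ 2) from (Real.sqrt_sq (norm_nonneg _)).symm,
      norm_euclid_sq, mul_assoc]
  rw [hL, hR]
  exact Real.sqrt_le_sqrt (key_sq_le A B v)

lemma key_ge (A : Matrix m n ℝ) (B : Matrix p q ℝ)
    (X : EuclideanSpace ℝ n) (Y : EuclideanSpace ℝ q) :
    ‖Matrix.toEuclideanLin A X‖ * ‖Matrix.toEuclideanLin B Y‖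
      ≤ l2OpNorm (A ⊗ₖ B) * (‖X‖ * ‖Y‖) := by
  set Z : EuclideanSpace ℝ (n × q) :=
    (WithLp.equiv 2 (n × q → ℝ)).symm (fun jl => X jl.1 * Y jl.2) with hZ
  have hnormZ : ‖Z‖ = ‖X‖ * ‖Y‖ := by
    have h1 : ‖Z‖ ^ 2 = (‖X‖ * ‖Y‖) ^ 2 := by
      rw [norm_euclid_sq, mul_pow, norm_euclid_sq, norm_euclid_sq, Finset.sum_mul_sum,
        Fintype.sum_prod_type]
      exact Finset.sum_congr rfl fun j _ => Finset.sum_congr rfl fun l _ => by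
        show (X j * Y l) ^ 2 = _; ring
    have h2 := congrArg Real.sqrt h1
    rwa [Real.sqrt_sq (norm_nonneg _),
      Real.sqrt_sq (mul_nonneg (norm_nonneg _) (norm_nonneg _))] at h2
  have happ : Matrix.toEuclideanLin (A ⊗ₖ B) Z
      = (WithLp.equiv 2 (m × p → ℝ)).symm
        (fun ik => A.mulVec ((WithLp.equiv 2 (n → ℝ)) X) ik.1
          * B.mulVec ((WithLp.equiv 2 (q → ℝ)) Y) ik.2) := by
    rw [Matrix.toEuclideanLin_apply]
    congr 1
    exact kron_mulVec_tensor A B _ _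
  have hnapp : ‖Matrix.toEuclideanLin (A ⊗ₖ B) Z‖
      = ‖Matrix.toEuclideanLin A X‖ * ‖Matrix.toEuclideanLin B Y‖ := by
    have h1 : ‖Matrix.toEuclideanLin (A ⊗ₖ B) Z‖ ^ 2
        = (‖Matrix.toEuclideanLin A X‖ * ‖Matrix.toEuclideanLin B Y‖) ^ 2 := by
      rw [norm_euclid_sq, mul_pow, norm_euclid_sq, norm_euclid_sq, Finset.sum_mul_sum,
        Fintype.sum_prod_type, happ]
      refine Finset.sum_congr rfl fun i _ => Finset.sum_congr rfl fun k _ => ?_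
      show (A.mulVec _ i * B.mulVec _ k) ^ 2 = _
      have : (Matrix.toEuclideanLin A X) i = A.mulVec ((WithLp.equiv 2 (n → ℝ)) X) i := rfl
      rw [this]
      have : (Matrix.toEuclideanLin B Y) k = B.mulVec ((WithLp.equiv 2 (q → ℝ)) Y) k := rfl
      rw [this]; ring
    have h2 := congrArg Real.sqrt h1
    rwa [Real.sqrt_sq (norm_nonneg _),
      Real.sqrt_sq (mul_nonneg (norm_nonneg _) (norm_nonneg _))] at h2
  calc ‖Matrix.toEuclideanLin A X‖ * ‖Matrix.toEuclideanLin B Y‖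
      = ‖Matrix.toEuclideanLin (A ⊗ₖ B) Z‖ := hnapp.symm
    _ ≤ l2OpNorm (A ⊗ₖ B) * ‖Z‖ :=
        (LinearMap.toContinuousLinearMap (Matrix.toEuclideanLin (A ⊗ₖ B))).le_opNorm Z
    _ = l2OpNorm (A ⊗ₖ B) * (‖X‖ * ‖Y‖) := by rw [hnormZ]

lemma kron_ge (A : Matrix m n ℝ) (B : Matrix p q ℝ) :
    l2OpNorm A * l2OpNorm B ≤ l2OpNorm (A ⊗ₖ B) := by
  rcases eq_or_lt_of_le (l2OpNorm_nonneg B) with hB | hB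
  · rw [← hB, mul_zero]; exact l2OpNorm_nonneg _
  rw [← le_div_iff₀ hB]
  refine ContinuousLinearMap.opNorm_le_bound _
    (div_nonneg (l2OpNorm_nonneg _) hB.le) fun X => ?_
  simp only [LinearMap.coe_toContinuousLinearMap']
  rw [div_mul_eq_mul_div, le_div_iff₀ hB]
  rcases eq_or_lt_of_le (norm_nonneg (Matrix.toEuclideanLin A X)) with hAX | hAX
  · rw [← hAX, zero_mul]
    exact mul_nonneg (l2OpNorm_nonneg _) (norm_nonneg _)
  have hB' : l2OpNorm B ≤ l2OpNorm (A ⊗ₖ B) * ‖X‖ / ‖Matrix.toEuclideanLin A X‖ := by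
    refine ContinuousLinearMap.opNorm_le_bound _
      (div_nonneg (mul_nonneg (l2OpNorm_nonneg _) (norm_nonneg _)) hAX.le) fun Y => ?_
    simp only [LinearMap.coe_toContinuousLinearMap']
    rw [div_mul_eq_mul_div, le_div_iff₀ hAX, mul_comm _ ‖Matrix.toEuclideanLin A X‖,
      mul_assoc]
    exact key_ge A B X Y
  calc ‖Matrix.toEuclideanLin A X‖ * l2OpNorm B
      ≤ ‖Matrix.toEuclideanLin A X‖
          * (l2OpNorm (A ⊗ₖ B) * ‖X‖ / ‖Matrix.toEuclideanLin A X‖) :=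
        mul_le_mul_of_nonneg_left hB' (norm_nonneg _)
    _ = l2OpNorm (A ⊗ₖ B) * ‖X‖ := by field_simp

end aux

/-- The ℓ2 operator norm of a Kronecker product is the product of the ℓ2
operator norms: `‖A ⊗ B‖ = ‖A‖ ⬝ ‖B‖`. -/
theorem l2OpNorm_kronecker {m n p q : Type*} [Fintype m] [Fintype n]
    [Fintype p] [Fintype q] [DecidableEq n] [DecidableEq q]
    (A : Matrix m n ℝ) (B : Matrix p q ℝ) :
    l2OpNorm (A ⊗ₖ B) = l2OpNorm A * l2OpNorm B := by
  exact le_antisymm (kron_le A B) (kron_ge A B)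
end
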